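/- For every ε > 0 and every positive integer r there is a constant C = C(ε, r) such that for all positive integers q, V and every index 1 ≤ i ≤ 2r the following holds: ∑ gcd(A_i(v), q) ≤ C · V^{2r} · (qV)^{ε}, where the sum runs over all 2r-tuples v = (v_1,…,v_{2r}) of integers with 1 ≤ v_j ≤ V for all j and A_i(v) ≠ 0, and A_i(v) = ∏_{j ≠ i} (v_i − v_j). -/

import Mathlib

/-!
Since `gcd(xy, q) ∣ gcd(x, q) gcd(y, q)`, the summand is at most `∏_{j ≠ i} gcd(v_i - v_j, q)`.
Once `v_i = a` is fixed this factorises over the coordinates `j ≠ i`, and for each `a`,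
`∑_{b ≠ a} gcd(a - b, q) ≤ 2 ∑_{n ≤ V} gcd(n, q) ≤ 2 V τ(q)` because
`gcd(n, q) ≤ ∑_{d ∣ q, d ∣ n} d`. So the sum is at most `V (2 V τ(q))^(2r-1)`, and the divisor
bound `τ(q) ≪_δ q^δ` with `δ = ε / (2r - 1)` finishes the proof.
-/

open Finset

lemma add_one_le_mul_pow {x : ℝ} (hx : 1 < x) (a : ℕ) :
    (a + 1 : ℝ) ≤ (1 + (x - 1)⁻¹) * x ^ a := by
  have bernoulli : 1 + a * (x - 1) ≤ x ^ a := by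
    simpa using one_add_mul_le_pow (show (-2 : ℝ) ≤ x - 1 by linarith) a
  have ha : (a : ℝ) ≤ (x - 1)⁻¹ * x ^ a := by
    rw [inv_mul_eq_div, le_div_iff₀ (by linarith)]
    linarith
  linarith [one_le_pow₀ (M₀ := ℝ) hx.le (n := a)]

lemma add_one_le_pow_of_two_le {x : ℝ} (hx : 2 ≤ x) (a : ℕ) : (a + 1 : ℝ) ≤ x ^ a := by
  have bernoulli := one_add_mul_le_pow (show (-2 : ℝ) ≤ x - 1 by linarith) a
  rw [add_sub_cancel] at bernoulli
  nlinarith [(Nat.cast_nonneg a : (0 : ℝ) ≤ a)]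

/-- Primes `p ≥ 2 ^ (1 / δ)` contribute a factor at most `1` to `τ(n) / n ^ δ`, and each of the
boundedly many smaller primes a bounded factor. -/
theorem Nat.card_divisors_le_mul_rpow {δ : ℝ} (hδ : 0 < δ) :
    ∃ C : ℝ, ∀ n : ℕ, n ≠ 0 → (#n.divisors : ℝ) ≤ C * (n : ℝ) ^ δ := by
  set B := ⌈(2 : ℝ) ^ δ⁻¹⌉₊
  set K := 1 + ((2 : ℝ) ^ δ - 1)⁻¹
  have h2δ : 1 < (2 : ℝ) ^ δ := Real.one_lt_rpow (by norm_num) hδ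
  have hK : 1 ≤ K := le_add_of_nonneg_right (inv_nonneg.2 (by linarith))
  have local_bound : ∀ p, p.Prime → ∀ a : ℕ,
      (a + 1 : ℝ) ≤ (if p < B then K else 1) * ((p : ℝ) ^ δ) ^ a := by
    intro p hp a
    have hp2 : (2 : ℝ) ≤ p := by exact_mod_cast hp.two_le
    split_ifs with hpB
    · calc (a + 1 : ℝ) ≤ K * ((2 : ℝ) ^ δ) ^ a := add_one_le_mul_pow h2δ a
        _ ≤ K * ((p : ℝ) ^ δ) ^ a := by gcongr
    · rw [one_mul]
      refine add_one_le_pow_of_two_le ?_ a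
      have hBp : (2 : ℝ) ^ δ⁻¹ ≤ p :=
        (Nat.le_ceil _).trans (by exact_mod_cast not_lt.1 hpB)
      calc (2 : ℝ) = ((2 : ℝ) ^ δ⁻¹) ^ δ := (Real.rpow_inv_rpow (by norm_num) hδ.ne').symm
        _ ≤ (p : ℝ) ^ δ := by gcongr
  refine ⟨K ^ B, fun n hn => ?_⟩
  have hnδ : (n : ℝ) ^ δ = ∏ p ∈ n.primeFactors, ((p : ℝ) ^ δ) ^ n.factorization p := by
    conv_lhs => rw [← Nat.prod_factorization_pow_eq_self hn]
    rw [Nat.prod_factorization_eq_prod_primeFactors, Nat.cast_prod,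
      ← Real.finsetProd_rpow _ _ fun p _ => by positivity]
    refine prod_congr rfl fun p _ => ?_
    rw [Nat.cast_pow, ← Real.rpow_natCast, ← Real.rpow_mul (by positivity), mul_comm,
      Real.rpow_mul (by positivity), Real.rpow_natCast]
  have small_primes : ∏ p ∈ n.primeFactors, (if p < B then K else 1) ≤ K ^ B := by
    rw [prod_ite, prod_const, prod_const, one_pow, mul_one]
    refine pow_le_pow_right₀ hK ((card_le_card fun p hp => ?_).trans (card_range B).le)
    exact mem_range.2 (mem_filter.1 hp).2
  calc (#n.divisors : ℝ) = ∏ p ∈ n.primeFactors, (n.factorization p + 1 : ℝ) := by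
        rw [Nat.card_divisors hn]; push_cast; rfl
    _ ≤ ∏ p ∈ n.primeFactors, (if p < B then K else 1) * ((p : ℝ) ^ δ) ^ n.factorization p :=
        prod_le_prod (fun _ _ => by positivity)
          fun p hp => local_bound p (Nat.prime_of_mem_primeFactors hp) _
    _ ≤ K ^ B * (n : ℝ) ^ δ := by
        rw [prod_mul_distrib, ← hnδ]
        gcongr

lemma Int.gcd_prod_dvd_prod_gcd {ι : Type*} (s : Finset ι) (f : ι → ℤ) (q : ℤ) :
    Int.gcd (∏ j ∈ s, f j) q ∣ ∏ j ∈ s, Int.gcd (f j) q := by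
  classical
  induction s using Finset.induction_on with
  | empty => simp
  | insert a s ha ih =>
    rw [prod_insert ha, prod_insert ha]
    exact (Int.gcd_mul_left_dvd_mul_gcd q _ _).trans (Nat.mul_dvd_mul_left _ ih)

lemma Nat.sum_gcd_Ioc_le (V : ℕ) {q : ℕ} (hq : q ≠ 0) :
    ∑ n ∈ Ioc 0 V, n.gcd q ≤ V * #q.divisors := by
  have gcd_le : ∀ n, n.gcd q ≤ ∑ d ∈ q.divisors, if d ∣ n then d else 0 := fun n => by
    have hmem : n.gcd q ∈ q.divisors := Nat.mem_divisors.2 ⟨Nat.gcd_dvd_right n q, hq⟩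
    simpa [Nat.gcd_dvd_left] using
      single_le_sum (f := fun d => if d ∣ n then d else 0) (fun _ _ => Nat.zero_le _) hmem
  calc ∑ n ∈ Ioc 0 V, n.gcd q
      ≤ ∑ n ∈ Ioc 0 V, ∑ d ∈ q.divisors, if d ∣ n then d else 0 := sum_le_sum fun n _ => gcd_le n
    _ = ∑ d ∈ q.divisors, #{n ∈ Ioc 0 V | d ∣ n} * d := by
        rw [sum_comm]
        refine sum_congr rfl fun d _ => ?_
        rw [← sum_filter, sum_const, smul_eq_mul]
    _ ≤ ∑ _d ∈ q.divisors, V := by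
        refine sum_le_sum fun d _ => ?_
        rw [Nat.Ioc_filter_dvd_card_eq_div]
        exact Nat.div_mul_le_self V d
    _ = V * #q.divisors := by rw [sum_const, smul_eq_mul, mul_comm]

lemma sum_natAbs_sub_le_two_mul_sum {a : ℤ} {s : Finset ℤ} {t : Finset ℕ}
    (hst : ∀ b ∈ s, (a - b).natAbs ∈ t) (G : ℕ → ℕ) :
    ∑ b ∈ s, G (a - b).natAbs ≤ 2 * ∑ n ∈ t, G n := by
  rw [← sum_fiberwise_of_maps_to' hst, mul_sum]
  refine sum_le_sum fun n _ => ?_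
  rw [sum_const, smul_eq_mul]
  refine Nat.mul_le_mul_right _ ((card_le_card (t := {a - n, a + n}) fun b hb => ?_).trans
    card_le_two)
  rcases Int.natAbs_eq_iff.1 (mem_filter.1 hb).2 with h | h
  · exact mem_insert.2 (Or.inl (by omega))
  · exact mem_insert.2 (Or.inr (mem_singleton.2 (by omega)))

lemma sum_gcd_sub_erase_le {V : ℕ} {a : ℤ} (ha : a ∈ Icc (1 : ℤ) V) {q : ℕ} (hq : q ≠ 0) :
    ∑ b ∈ (Icc (1 : ℤ) V).erase a, Int.gcd (a - b) q ≤ 2 * V * #q.divisors := by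
  have maps_to : ∀ b ∈ (Icc (1 : ℤ) V).erase a, (a - b).natAbs ∈ Ioc 0 V := by
    intro b hb
    obtain ⟨hba, hb⟩ := mem_erase.1 hb
    rw [mem_Icc] at ha hb
    rw [mem_Ioc]
    omega
  calc ∑ b ∈ (Icc (1 : ℤ) V).erase a, Int.gcd (a - b) q
      ≤ 2 * ∑ n ∈ Ioc 0 V, n.gcd q := sum_natAbs_sub_le_two_mul_sum maps_to (Nat.gcd · q)
    _ ≤ 2 * V * #q.divisors := by
        rw [mul_assoc]
        exact Nat.mul_le_mul_left 2 (Nat.sum_gcd_Ioc_le V hq)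

lemma sum_piFinset_prod_erase {ι α R : Type*} [Fintype ι] [DecidableEq ι] [DecidableEq α]
    [CommSemiring R] (i : ι) (t : Finset α) (F : α → α → R) :
    ∑ v ∈ Fintype.piFinset (fun _ : ι => t), ∏ j ∈ univ.erase i, F (v i) (v j) =
      ∑ a ∈ t, (∑ b ∈ t, F a b) ^ (Fintype.card ι - 1) := by
  -- the indicator at the coordinate `i` fixes `v i = a` and makes the summand a product of
  -- functions of single coordinates
  set H : α → ι → α → R := fun a j x => if j = i then (if x = a then 1 else 0) else F a x
  have split_at_i : ∀ a (v : ι → α),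
      ∏ j, H a j (v j) = (if v i = a then 1 else 0) * ∏ j ∈ univ.erase i, F a (v j) := by
    intro a v
    rw [← mul_prod_erase _ _ (mem_univ i)]
    simp only [H, if_true]
    congr 1
    exact prod_congr rfl fun j hj => if_neg (ne_of_mem_erase hj)
  calc ∑ v ∈ Fintype.piFinset (fun _ : ι => t), ∏ j ∈ univ.erase i, F (v i) (v j)
      = ∑ v ∈ Fintype.piFinset (fun _ : ι => t), ∑ a ∈ t, ∏ j, H a j (v j) := by
        refine sum_congr rfl fun v hv => ?_
        simp only [split_at_i, ite_mul, one_mul, zero_mul]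
        rw [sum_ite_eq t (v i), if_pos (Fintype.mem_piFinset.1 hv i)]
    _ = ∑ a ∈ t, ∏ j, ∑ x ∈ t, H a j x := by
        rw [sum_comm]
        exact sum_congr rfl fun a _ => (prod_univ_sum (fun _ => t) (H a)).symm
    _ = ∑ a ∈ t, (∑ b ∈ t, F a b) ^ (Fintype.card ι - 1) := by
        refine sum_congr rfl fun a ha => ?_
        rw [← mul_prod_erase _ _ (mem_univ i),
          prod_congr rfl fun j hj => (show ∑ x ∈ t, H a j x = ∑ b ∈ t, F a b by
            simp [H, ne_of_mem_erase hj]),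
          prod_const, card_erase_of_mem (mem_univ i), card_univ]
        simp [H, ha]

lemma sum_gcd_prod_sub_le {ι : Type*} [Fintype ι] [DecidableEq ι] (i : ι) (V : ℕ) {q : ℕ}
    (hq : q ≠ 0) :
    ∑ v ∈ (Fintype.piFinset fun _ : ι => Icc (1 : ℤ) V).filter
        (fun v => ∏ j ∈ univ.erase i, (v i - v j) ≠ 0),
      Int.gcd (∏ j ∈ univ.erase i, (v i - v j)) q ≤
    V * (2 * V * #q.divisors) ^ (Fintype.card ι - 1) := by
  -- `F` vanishes on the diagonal, so dropping the condition `A_i(v) ≠ 0` costs nothing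
  set F : ℤ → ℤ → ℕ := fun a b => if b = a then 0 else Int.gcd (a - b) q
  have gcd_le : ∀ v ∈ (Fintype.piFinset fun _ : ι => Icc (1 : ℤ) V).filter
      (fun v => ∏ j ∈ univ.erase i, (v i - v j) ≠ 0),
      Int.gcd (∏ j ∈ univ.erase i, (v i - v j)) q ≤ ∏ j ∈ univ.erase i, F (v i) (v j) := by
    intro v hv
    have hne := prod_ne_zero_iff.1 (mem_filter.1 hv).2
    rw [prod_congr rfl fun j hj => if_neg fun h => hne j hj (by rw [h, sub_self])]
    refine Nat.le_of_dvd (prod_pos fun j _ => ?_) (Int.gcd_prod_dvd_prod_gcd _ _ _)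
    exact Int.gcd_pos_of_ne_zero_right _ (by exact_mod_cast hq)
  calc _ ≤ ∑ v ∈ Fintype.piFinset (fun _ : ι => Icc (1 : ℤ) V),
        ∏ j ∈ univ.erase i, F (v i) (v j) :=
        (sum_le_sum gcd_le).trans (sum_le_sum_of_subset (filter_subset _ _))
    _ = ∑ a ∈ Icc (1 : ℤ) V, (∑ b ∈ Icc (1 : ℤ) V, F a b) ^ (Fintype.card ι - 1) :=
        sum_piFinset_prod_erase i _ F
    _ ≤ ∑ _a ∈ Icc (1 : ℤ) V, (2 * V * #q.divisors) ^ (Fintype.card ι - 1) := by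
        refine sum_le_sum fun a ha => Nat.pow_le_pow_left ?_ _
        rw [← sum_erase_add _ _ ha, show F a a = 0 from if_pos rfl, add_zero,
          sum_congr rfl fun b hb => if_neg (ne_of_mem_erase hb)]
        exact sum_gcd_sub_erase_le ha hq
    _ = V * (2 * V * #q.divisors) ^ (Fintype.card ι - 1) := by simp

open Classical in
theorem stmt14 (ε : ℝ) (hε : 0 < ε) (r : ℕ) (hr : 0 < r) :
    ∃ C : ℝ, ∀ q V : ℕ, 0 < q → 0 < V → ∀ i : Fin (2 * r),
      (∑ v ∈ (Fintype.piFinset fun _ : Fin (2 * r) => Finset.Icc (1 : ℤ) (V : ℤ)).filter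
          (fun v : Fin (2 * r) → ℤ => (∏ j ∈ Finset.univ.erase i, (v i - v j)) ≠ 0),
        (Int.gcd (∏ j ∈ Finset.univ.erase i, (v i - v j)) (q : ℤ) : ℝ)) ≤
      C * (V : ℝ) ^ (2 * r) * ((q : ℝ) * (V : ℝ)) ^ ε := by
  obtain ⟨m, hm⟩ : ∃ m, 2 * r = m + 1 := ⟨2 * r - 1, by omega⟩
  have hm0 : (0 : ℝ) < m := by exact_mod_cast (by omega : 0 < m)
  obtain ⟨C, hC⟩ := Nat.card_divisors_le_mul_rpow (div_pos hε hm0)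
  have hC0 : 0 ≤ C := by linarith [show (1 : ℝ) ≤ C by simpa using hC 1 one_ne_zero]
  refine ⟨(2 * C) ^ m, fun q V hq hV i => ?_⟩
  have hcount := sum_gcd_prod_sub_le i V hq.ne'
  rw [Fintype.card_fin, show 2 * r - 1 = m by omega] at hcount
  have hqε : ((q : ℝ) ^ (ε / m)) ^ m = (q : ℝ) ^ ε := by
    rw [← Real.rpow_mul_natCast (by positivity), div_mul_cancel₀ _ hm0.ne']
  have hqV : (q : ℝ) ≤ q * V := le_mul_of_one_le_right (by positivity) (by exact_mod_cast hV)
  calc _ ≤ (V : ℝ) * (2 * V * #q.divisors) ^ m := by exact_mod_cast hcount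
    _ ≤ V * (2 * V * (C * (q : ℝ) ^ (ε / m))) ^ m := by gcongr; exact hC q hq.ne'
    _ = (2 * C) ^ m * (V : ℝ) ^ (2 * r) * (q : ℝ) ^ ε := by
        rw [hm, ← hqε]
        ring
    _ ≤ (2 * C) ^ m * (V : ℝ) ^ (2 * r) * ((q : ℝ) * V) ^ ε := by
        gcongr
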